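/- arXiv:2402.19374 — 11 statements merged into one kernel-verified Lean document; each statement's English description precedes it below -/
import Mathlib

section
/- Let R be an associative unital ring and X a nonempty subset of R. If R is prime and X-semiprime, then R is X-prime. -/
theorem stmt0 {R : Type*} [Ring R] (X : Set R) (hX : X.Nonempty)
    (hprime : ∀ a b : R, (∀ x : R, a * x * b = 0) → a = 0 ∨ b = 0)
    (hsemi : ∀ a : R, (∀ x ∈ X, a * x * a = 0) → a = 0) :
    ∀ a b : R, (∀ x ∈ X, a * x * b = 0) → a = 0 ∨ b = 0 := by
  intro a b h
  rcases hprime b a (fun r => hsemi (b * r * a) (fun x hx => by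
    have := h x hx
    calc b * r * a * x * (b * r * a) = b * r * (a * x * b) * r * a := by simp only [mul_assoc]
    _ = 0 := by rw [this, mul_zero, zero_mul, zero_mul])) with hb | ha
  · exact Or.inr hb
  · exact Or.inl ha
end

section
/- Let R be a semiprime ring. If R is E(R)-semiprime then R is U(R)-semiprime; that is, if for every a ∈ R, aea = 0 for all idempotents e ∈ R implies a = 0, then for every a ∈ R, aua = 0 for all units u ∈ R implies a = 0. -/
theorem stmt1 {R : Type*} [Ring R]
    (hsp : ∀ a : R, (∀ x : R, a * x * a = 0) → a = 0)
    (hE : ∀ a : R,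
      (∀ x ∈ AddSubgroup.closure {e : R | IsIdempotentElem e}, a * x * a = 0) → a = 0) :
    ∀ a : R, (∀ u : Rˣ, a * (u : R) * a = 0) → a = 0 := by
  intro a hu
  have h1 : a * a = 0 := by simpa using hu 1
  have hnil : ∀ t : R, t * t = 0 → a * t * a = 0 := by
    intro t ht
    have hu1 : a * (1 + t) * a = 0 := by
      refine hu ⟨1 + t, 1 - t, ?_, ?_⟩
      · rw [show (1 + t) * (1 - t) = 1 - t * t by noncomm_ring, ht, sub_zero]
      · rw [show (1 - t) * (1 + t) = 1 - t * t by noncomm_ring, ht, sub_zero]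
    have : a * (1 + t) * a = a * a + a * t * a := by noncomm_ring
    rw [this, h1, zero_add] at hu1
    exact hu1
  have key : ∀ e : R, IsIdempotentElem e → a * e * a = 0 := by
    intro e he
    have h0 : (1 - e) * e = 0 := by rw [sub_mul, one_mul, he.eq, sub_self]
    have h0' : e * (1 - e) = 0 := by rw [mul_sub, mul_one, he.eq, sub_self]
    have h2 : ∀ x : R, a * (e * x * (1 - e)) * a = 0 := by
      intro x
      refine hnil _ ?_
      rw [show e * x * (1 - e) * (e * x * (1 - e)) = e * x * ((1 - e) * e) * (x * (1 - e)) by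
        noncomm_ring, h0, mul_zero, zero_mul]
    have h3 : ∀ x : R, a * ((1 - e) * x * e) * a = 0 := by
      intro x
      refine hnil _ ?_
      rw [show (1 - e) * x * e * ((1 - e) * x * e) = (1 - e) * x * (e * (1 - e)) * (x * e) by
        noncomm_ring, h0', mul_zero, zero_mul]
    have hb : (1 - e) * a * e = 0 := by
      refine hsp _ (fun x => ?_)
      rw [show (1 - e) * a * e * x * ((1 - e) * a * e)
          = (1 - e) * (a * (e * x * (1 - e)) * a) * e by noncomm_ring, h2, mul_zero, zero_mul]
    have hc : e * a * (1 - e) = 0 := by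
      refine hsp _ (fun x => ?_)
      rw [show e * a * (1 - e) * x * (e * a * (1 - e))
          = e * (a * ((1 - e) * x * e) * a) * (1 - e) by noncomm_ring, h3, mul_zero, zero_mul]
    have hae : a * e = e * a * e := by
      have : a * e - e * a * e = 0 := by rw [← hb]; noncomm_ring
      exact sub_eq_zero.mp this
    have hea : e * a = e * a * e := by
      have : e * a - e * a * e = 0 := by rw [← hc]; noncomm_ring
      exact sub_eq_zero.mp this
    rw [hae, ← hea, mul_assoc, h1, mul_zero]
  refine hE a (fun x hx => ?_)
  refine AddSubgroup.closure_induction (fun y hy => key y hy) (by simp)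
    (fun x y _ _ px py => ?_) (fun x _ px => ?_) hx
  · rw [mul_add, add_mul, px, py, add_zero]
  · rw [mul_neg, neg_mul, px, neg_zero]
end

section
/- In any unital ring R, the additive subgroup E(R) generated by the idempotents is a Lie ideal of R, i.e., [E(R), R] ⊆ E(R). -/
/-!
For an idempotent `e`, the elements `e + e r (1 - e)` and `e + (1 - e) r e` are again idempotent,
and their difference is `e r - r e`. Since `x ↦ x r - r x` is additive, idempotent `x` suffice.
-/

namespace IsIdempotentElem

variable {R : Type*}

section NonUnitalSemiring

variable [NonUnitalSemiring R] {e n : R}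

lemma add_of_mul_left_eq_self_of_mul_right_eq_zero (he : IsIdempotentElem e)
    (hen : e * n = n) (hne : n * e = 0) : IsIdempotentElem (e + n) := by
  have hnn : n * n = 0 :=
    calc n * n = n * (e * n) := by rw [hen]
      _ = 0 := by rw [← mul_assoc, hne, zero_mul]
  simp [IsIdempotentElem, add_mul, mul_add, he.eq, hen, hne, hnn]

lemma add_of_mul_right_eq_self_of_mul_left_eq_zero (he : IsIdempotentElem e)
    (hne : n * e = n) (hen : e * n = 0) : IsIdempotentElem (e + n) := by
  have hnn : n * n = 0 :=
    calc n * n = n * e * n := by rw [hne]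
      _ = 0 := by rw [mul_assoc, hen, mul_zero]
  simp [IsIdempotentElem, add_mul, mul_add, he.eq, hen, hne, hnn]

end NonUnitalSemiring

section Ring

variable [Ring R] {e : R}

lemma add_mul_mul_one_sub (he : IsIdempotentElem e) (x : R) :
    IsIdempotentElem (e + e * x * (1 - e)) :=
  he.add_of_mul_left_eq_self_of_mul_right_eq_zero (by rw [← mul_assoc, ← mul_assoc, he.eq])
    (by rw [mul_assoc, he.one_sub_mul_self, mul_zero])

lemma add_one_sub_mul_mul (he : IsIdempotentElem e) (x : R) :
    IsIdempotentElem (e + (1 - e) * x * e) :=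
  he.add_of_mul_right_eq_self_of_mul_left_eq_zero (by rw [mul_assoc, he.eq])
    (by rw [← mul_assoc, ← mul_assoc, he.mul_one_sub_self, zero_mul, zero_mul])

lemma mul_sub_mul_mem_closure (he : IsIdempotentElem e) (x : R) :
    e * x - x * e ∈ AddSubgroup.closure {e : R | IsIdempotentElem e} := by
  have hdiff : e * x - x * e = (e + e * x * (1 - e)) - (e + (1 - e) * x * e) := by noncomm_ring
  rw [hdiff]
  exact sub_mem (AddSubgroup.subset_closure (he.add_mul_mul_one_sub x))
    (AddSubgroup.subset_closure (he.add_one_sub_mul_mul x))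

end Ring

end IsIdempotentElem

theorem stmt2 {R : Type*} [Ring R] :
    ∀ x ∈ AddSubgroup.closure {e : R | IsIdempotentElem e}, ∀ r : R,
      x * r - r * x ∈ AddSubgroup.closure {e : R | IsIdempotentElem e} := by
  intro x hx r
  have hspan : AddSubgroup.closure {e : R | IsIdempotentElem e} ≤
      (AddSubgroup.closure {e : R | IsIdempotentElem e}).comap
        (AddMonoidHom.mulRight r - AddMonoidHom.mulLeft r) :=
    AddSubgroup.closure_le _ |>.mpr fun e he ↦ he.mul_sub_mul_mem_closure r
  exact hspan hx
end

section
/- Let R be a semiprime ring and L a Lie ideal of R. If aLb = 0 for a, b ∈ R, then aL²b = 0. -/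
theorem stmt4 {R : Type*} [Ring R]
    (hsp : ∀ x : R, (∀ r : R, x * r * x = 0) → x = 0)
    (L : AddSubgroup R) (hL : ∀ x ∈ L, ∀ r : R, x * r - r * x ∈ L)
    (a b : R) (hab : ∀ x ∈ L, a * x * b = 0) :
    ∀ x ∈ L, ∀ y ∈ L, a * (x * y) * b = 0 := by
  -- swap lemma: a x s b = a s x b for x ∈ L, s ∈ R
  have swap : ∀ x ∈ L, ∀ s : R, a * x * s * b = a * s * x * b := by
    intro x hx s
    have h := hab _ (hL x hx s)
    have h3 : a * x * s * b - a * s * x * b = 0 := by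
      have h2 : a * x * s * b - a * s * x * b = a * (x * s - s * x) * b := by
        noncomm_ring
      rw [h2, h]
    exact sub_eq_zero.mp h3
  -- key: a R a L² b = 0
  have key : ∀ r : R, ∀ x ∈ L, ∀ y ∈ L, a * r * (a * x * y * b) = 0 := by
    intro r x hx y hy
    apply hsp
    intro t
    have hc : a * r * (a * x * y * b) = a * y * (r * a * x) * b := by
      rw [swap y hy (r * a * x)]; noncomm_ring
    calc a * r * (a * x * y * b) * t * (a * r * (a * x * y * b))
        = a * y * (((r * a * x) * b * t) * (a * y * (r * a * x))) * b := by
          rw [hc]; noncomm_ring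
      _ = a * (((r * a * x) * b * t) * (a * y * (r * a * x))) * y * b :=
          swap y hy _
      _ = 0 := by
          have h4 : a * (((r * a * x) * b * t) * (a * y * (r * a * x))) * y * b
              = a * r * (a * x * b) * (t * (a * y * (r * a * x * y * b))) := by
            noncomm_ring
          rw [h4, hab x hx]
          simp
  intro x hx y hy
  apply hsp
  intro r
  have k := key (x * y * b * r) x hx y hy
  calc a * (x * y) * b * r * (a * (x * y) * b)
      = a * (x * y * b * r) * (a * x * y * b) := by noncomm_ring
    _ = 0 := k
end

section
/- Let R be a prime ring and L a Lie ideal of R with [L, L] ≠ 0. Then R is L-prime: if aLb = 0 for a, b ∈ R, then a = 0 or b = 0. -/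
theorem stmt6 {R : Type*} [Ring R]
    (hprime : ∀ a b : R, (∀ x : R, a * x * b = 0) → a = 0 ∨ b = 0)
    (L : AddSubgroup R) (hL : ∀ x ∈ L, ∀ r : R, x * r - r * x ∈ L)
    (hLL : ∃ x ∈ L, ∃ y ∈ L, x * y - y * x ≠ 0) :
    ∀ a b : R, (∀ x ∈ L, a * x * b = 0) → a = 0 ∨ b = 0 := by
  intro a b hab
  by_cases hb : b = 0
  · exact Or.inr hb
  by_cases ha : a = 0
  · exact Or.inl ha
  exfalso
  -- star identity: a * (x * w) * b = a * (w * x) * b for x ∈ L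
  have star : ∀ x ∈ L, ∀ w : R, a * (x * w) * b = a * (w * x) * b := by
    intro x hx w
    have h := hab _ (hL x hx w)
    have h2 : a * (x * w) * b - a * (w * x) * b = 0 := by
      rw [← h]; noncomm_ring
    exact sub_eq_zero.mp h2
  -- a L² b = 0
  have hL2 : ∀ x ∈ L, ∀ y ∈ L, a * (x * y) * b = 0 := by
    intro x hx y hy
    have key : ∀ r : R, (a * (x * y) * b) * r * b = 0 := by
      intro r
      have h1 := star x hx (y * b * r)
      have h2 : a * ((y * b * r) * x) * b = (a * y * b) * (r * x * b) := by
        noncomm_ring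
      rw [hab y hy] at h2
      have h3 : a * (x * (y * b * r)) * b = (a * (x * y) * b) * r * b := by
        noncomm_ring
      rw [← h3, h1, h2]
      noncomm_ring
    rcases hprime _ _ key with h | h
    · exact h
    · exact absurd h hb
  -- a * w * ([x,y] * b) = 0 for all w
  have hRC : ∀ x ∈ L, ∀ y ∈ L, ∀ w : R, a * w * ((x * y - y * x) * b) = 0 := by
    intro x hx y hy w
    have e1 := star _ (hL x hx y) w
    have e2 := star y hy (x * w)
    have e3 := hL2 x hx _ (hL y hy w)
    -- goal: a * w * ((x*y - y*x)*b) = 0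
    have : a * w * ((x * y - y * x) * b)
        = (a * ((x * y - y * x) * w) * b - a * (w * (x * y - y * x)) * b) * (-1)
          + (a * (y * (x * w)) * b - a * ((x * w) * y) * b) * (-1)
          + a * (x * (y * w - w * y)) * b := by
      noncomm_ring
    rw [this, e1, e2, e3]
    noncomm_ring
  -- [L,L] * b = 0
  have hCb : ∀ x ∈ L, ∀ y ∈ L, (x * y - y * x) * b = 0 := by
    intro x hx y hy
    rcases hprime a ((x * y - y * x) * b) (fun w => hRC x hx y hy w) with h | h
    · exact absurd h ha
    · exact h
  obtain ⟨x, hx, y, hy, hc⟩ := hLL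
  have key : ∀ r : R, (x * y - y * x) * r * b = 0 := by
    intro r
    have h1 := hCb _ (hL x hx r) y hy
    have h2 := hCb x hx _ (hL y hy r)
    have h3 := hCb x hx y hy
    have : (x * y - y * x) * r * b
        = ((x * r - r * x) * y - y * (x * r - r * x)) * b
          + (x * (y * r - r * y) - (y * r - r * y) * x) * b
          + r * ((x * y - y * x) * b) := by
      noncomm_ring
    rw [this, h1, h2, h3]
    noncomm_ring
  rcases hprime _ _ key with h | h
  · exact hc h
  · exact hb h
end

section
/- Let R be a noncommutative prime ring and I, J nonzero two-sided ideals of R. Then [[I∩J, I∩J], [I∩J, I∩J]] ≠ 0; in particular [[I,J],[I,J]] ≠ 0. -/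
/-- The additive subgroup generated by commutators `a * b - b * a` with `a ∈ A`, `b ∈ B`. -/
def lieBr {R : Type*} [Ring R] (A B : Set R) : AddSubgroup R :=
  AddSubgroup.closure {z : R | ∃ a ∈ A, ∃ b ∈ B, z = a * b - b * a}

section Aux

variable {R : Type*} [Ring R]

lemma left_ann (hprime : ∀ a b : R, (∀ x : R, a * x * b = 0) → a = 0 ∨ b = 0)
    (K : TwoSidedIdeal R) (k₀ : R) (hk₀ : k₀ ∈ K) (hk₀0 : k₀ ≠ 0)
    (z : R) (h : ∀ w ∈ K, w * z = 0) : z = 0 := by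
  rcases hprime k₀ z (fun x => by
    exact h (k₀ * x) (K.mul_mem_right _ _ hk₀)) with h' | h'
  · exact absurd h' hk₀0
  · exact h'

lemma right_ann (hprime : ∀ a b : R, (∀ x : R, a * x * b = 0) → a = 0 ∨ b = 0)
    (K : TwoSidedIdeal R) (k₀ : R) (hk₀ : k₀ ∈ K) (hk₀0 : k₀ ≠ 0)
    (z : R) (h : ∀ w ∈ K, z * w = 0) : z = 0 := by
  rcases hprime z k₀ (fun x => by
    have h' := h (x * k₀) (K.mul_mem_left _ _ hk₀)
    rwa [← mul_assoc] at h') with h' | h'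
  · exact h'
  · exact absurd h' hk₀0

/-- Herstein: if `a` centralizes `[K,K]` for a nonzero two-sided ideal `K` of a prime ring,
then `a` is central. -/
lemma herstein (hprime : ∀ a b : R, (∀ x : R, a * x * b = 0) → a = 0 ∨ b = 0)
    (K : TwoSidedIdeal R) (k₀ : R) (hk₀ : k₀ ∈ K) (hk₀0 : k₀ ≠ 0)
    (a : R) (ha : ∀ u ∈ K, ∀ v ∈ K, a * (u * v - v * u) = (u * v - v * u) * a) :
    ∀ x : R, a * x = x * a := by
  -- Step A : [a,u][u,v] = 0
  have stepA : ∀ u ∈ K, ∀ v ∈ K, (a * u - u * a) * (u * v - v * u) = 0 := by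
    intro u hu v hv
    have h1 : a * (u * (u * v) - (u * v) * u) - (u * (u * v) - (u * v) * u) * a = 0 :=
      sub_eq_zero.mpr (ha u hu (u * v) (K.mul_mem_left _ _ hv))
    have h2 : a * (u * v - v * u) - (u * v - v * u) * a = 0 :=
      sub_eq_zero.mpr (ha u hu v hv)
    calc (a * u - u * a) * (u * v - v * u)
        = (a * (u * (u * v) - (u * v) * u) - (u * (u * v) - (u * v) * u) * a)
          - u * (a * (u * v - v * u) - (u * v - v * u) * a) := by noncomm_ring
      _ = 0 := by rw [h1, h2]; noncomm_ring
  -- Step B : [a,u] v [u,w] = 0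
  have stepB : ∀ u ∈ K, ∀ v ∈ K, ∀ w ∈ K, (a * u - u * a) * v * (u * w - w * u) = 0 := by
    intro u hu v hv w hw
    have h1 : (a * u - u * a) * (u * (v * w) - (v * w) * u) = 0 :=
      stepA u hu (v * w) (K.mul_mem_right _ _ hv)
    have h2 : (a * u - u * a) * (u * v - v * u) = 0 := stepA u hu v hv
    calc (a * u - u * a) * v * (u * w - w * u)
        = (a * u - u * a) * (u * (v * w) - (v * w) * u)
          - ((a * u - u * a) * (u * v - v * u)) * w := by noncomm_ring
      _ = 0 := by rw [h1, h2]; noncomm_ring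
  -- Step C : a commutes with K
  have stepC : ∀ u ∈ K, a * u = u * a := by
    intro u hu
    by_cases hcase : ∃ w ∈ K, u * w - w * u ≠ 0
    · obtain ⟨w, hw, hw0⟩ := hcase
      have hak : ∀ k ∈ K, (a * u - u * a) * k = 0 := by
        intro k hk
        rcases hprime ((a * u - u * a) * k) (u * w - w * u) (fun x => by
          have h := stepB u hu (k * x) (K.mul_mem_right _ _ hk) w hw
          calc (a * u - u * a) * k * x * (u * w - w * u)
              = (a * u - u * a) * (k * x) * (u * w - w * u) := by noncomm_ring
            _ = 0 := h) with h' | h'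
        · exact h'
        · exact absurd h' hw0
      exact sub_eq_zero.mp (right_ann hprime K k₀ hk₀ hk₀0 (a * u - u * a) hak)
    · push_neg at hcase
      have hcomm : ∀ w ∈ K, u * w = w * u := fun w hw => sub_eq_zero.mp (hcase w hw)
      have hucent : ∀ x : R, u * x = x * u := by
        intro x
        have h : ∀ w ∈ K, w * (u * x - x * u) = 0 := by
          intro w hw
          have h1 : u * (w * x) = (w * x) * u := hcomm (w * x) (K.mul_mem_right _ _ hw)
          have h2 : u * w = w * u := hcomm w hw
          calc w * (u * x - x * u) = (w * u) * x - w * (x * u) := by noncomm_ring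
            _ = (u * w) * x - w * (x * u) := by rw [h2]
            _ = u * (w * x) - (w * x) * u := by noncomm_ring
            _ = 0 := by rw [h1]; noncomm_ring
        exact sub_eq_zero.mp (left_ann hprime K k₀ hk₀ hk₀0 _ h)
      exact (hucent a).symm
  -- Step D : a is central
  intro x
  have h : ∀ w ∈ K, w * (a * x - x * a) = 0 := by
    intro w hw
    have h1 : a * (w * x) = (w * x) * a := stepC (w * x) (K.mul_mem_right _ _ hw)
    have h2 : a * w = w * a := stepC w hw
    calc w * (a * x - x * a) = (w * a) * x - w * (x * a) := by noncomm_ring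
      _ = (a * w) * x - w * (x * a) := by rw [h2]
      _ = a * (w * x) - (w * x) * a := by noncomm_ring
      _ = 0 := by rw [h1]; noncomm_ring
  exact sub_eq_zero.mp (left_ann hprime K k₀ hk₀ hk₀0 _ h)

/-- The key lemma: `[[K,K],[K,K]] = 0` forces commutativity. -/
lemma key_comm (hprime : ∀ a b : R, (∀ x : R, a * x * b = 0) → a = 0 ∨ b = 0)
    (K : TwoSidedIdeal R) (k₀ : R) (hk₀ : k₀ ∈ K) (hk₀0 : k₀ ≠ 0)
    (H : ∀ u ∈ K, ∀ v ∈ K, ∀ u' ∈ K, ∀ v' ∈ K,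
      (u * v - v * u) * (u' * v' - v' * u') = (u' * v' - v' * u') * (u * v - v * u)) :
    ∀ x y : R, x * y = y * x := by
  -- every commutator [a,b], a,b ∈ K, is central
  have hcent : ∀ a ∈ K, ∀ b ∈ K, ∀ x : R, (a * b - b * a) * x = x * (a * b - b * a) :=
    fun a ha b hb => herstein hprime K k₀ hk₀ hk₀0 _
      (fun u hu v hv => (H u hu v hv a ha b hb).symm)
  -- [a,b]² = 0 hence [a,b] = 0
  have hzero : ∀ a ∈ K, ∀ b ∈ K, a * b - b * a = 0 := by
    intro a ha b hb
    set c := a * b - b * a with hc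
    have hccent : ∀ x : R, c * x = x * c := hcent a ha b hb
    have hac : ∀ x : R, (a * (a * b) - (a * b) * a) * x = x * (a * (a * b) - (a * b) * a) :=
      hcent a ha (a * b) (K.mul_mem_left _ _ hb)
    have hc2 : c * c = 0 := by
      have h1 : (a * (a * b) - (a * b) * a) * b = b * (a * (a * b) - (a * b) * a) := hac b
      have h2 : c * b = b * c := hccent b
      calc c * c = (a * b - b * a) * c := by rw [hc]
        _ = a * (b * c) - b * (a * c) := by rw [hc]; noncomm_ring
        _ = a * (c * b) - b * (a * c) := by rw [h2]
        _ = (a * (a * b) - (a * b) * a) * b - b * (a * c) := by rw [hc]; noncomm_ring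
        _ = b * (a * (a * b) - (a * b) * a) - b * (a * c) := by rw [h1]
        _ = 0 := by rw [hc]; noncomm_ring
    rcases hprime c c (fun x => by
      calc c * x * c = (c * x) * c := by noncomm_ring
        _ = (x * c) * c := by rw [hccent x]
        _ = x * (c * c) := by noncomm_ring
        _ = 0 := by rw [hc2, mul_zero]) with h | h
    · exact h
    · exact h
  -- [K,K] = 0, so each element of K is central
  have hKcent : ∀ a ∈ K, ∀ x : R, a * x = x * a := by
    intro a ha
    exact herstein hprime K k₀ hk₀ hk₀0 a (fun u hu v hv => by
      rw [hzero u hu v hv]; noncomm_ring)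
  -- k₀ central nonzero kills all commutators
  intro x y
  have hk0c : ∀ w : R, k₀ * w = w * k₀ := hKcent k₀ hk₀
  have hkx : ∀ w : R, (k₀ * x) * w = w * (k₀ * x) := hKcent _ (K.mul_mem_right _ _ hk₀)
  have base : k₀ * (x * y - y * x) = 0 := by
    calc k₀ * (x * y - y * x) = (k₀ * x) * y - k₀ * (y * x) := by noncomm_ring
      _ = y * (k₀ * x) - k₀ * (y * x) := by rw [hkx y]
      _ = y * (k₀ * x) - (k₀ * y) * x := by noncomm_ring
      _ = y * (k₀ * x) - (y * k₀) * x := by rw [hk0c y]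
      _ = 0 := by noncomm_ring
  have h : ∀ z : R, k₀ * z * (x * y - y * x) = 0 := by
    intro z
    rw [hk0c z, mul_assoc, base, mul_zero]
  rcases hprime k₀ (x * y - y * x) h with h' | h'
  · exact absurd h' hk₀0
  · exact sub_eq_zero.mp h'

lemma exists_mem_ne_zero {K : TwoSidedIdeal R} (hK : K ≠ ⊥) : ∃ a, a ∈ K ∧ a ≠ 0 := by
  by_contra h
  push_neg at h
  apply hK
  ext z
  rw [TwoSidedIdeal.mem_bot]
  exact ⟨fun hz => h z hz, fun hz => hz ▸ K.zero_mem⟩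

end Aux

theorem stmt7 {R : Type*} [Ring R]
    (hnc : ∃ x y : R, x * y ≠ y * x)
    (hprime : ∀ a b : R, (∀ x : R, a * x * b = 0) → a = 0 ∨ b = 0)
    (I J : TwoSidedIdeal R) (hI : I ≠ ⊥) (hJ : J ≠ ⊥) :
    lieBr (lieBr ((I ⊓ J : TwoSidedIdeal R) : Set R) ((I ⊓ J : TwoSidedIdeal R) : Set R) : Set R)
        (lieBr ((I ⊓ J : TwoSidedIdeal R) : Set R) ((I ⊓ J : TwoSidedIdeal R) : Set R) : Set R)
      ≠ ⊥ ∧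
    lieBr (lieBr (I : Set R) (J : Set R) : Set R) (lieBr (I : Set R) (J : Set R) : Set R)
      ≠ ⊥ := by
  obtain ⟨x₀, y₀, hxy⟩ := hnc
  obtain ⟨a, haI, ha0⟩ := exists_mem_ne_zero hI
  obtain ⟨b, hbJ, hb0⟩ := exists_mem_ne_zero hJ
  obtain ⟨x, hx⟩ : ∃ x : R, a * x * b ≠ 0 := by
    by_contra h
    push_neg at h
    rcases hprime a b h with h' | h'
    · exact ha0 h'
    · exact hb0 h'
  set k₀ := a * x * b with hk₀def
  have hk₀I : k₀ ∈ I := I.mul_mem_right _ _ (I.mul_mem_right _ _ haI)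
  have hk₀J : k₀ ∈ J := J.mul_mem_left _ _ hbJ
  have hk₀ : k₀ ∈ I ⊓ J := ⟨hk₀I, hk₀J⟩
  constructor
  · intro hbot
    have H : ∀ u ∈ I ⊓ J, ∀ v ∈ I ⊓ J, ∀ u' ∈ I ⊓ J, ∀ v' ∈ I ⊓ J,
        (u * v - v * u) * (u' * v' - v' * u') = (u' * v' - v' * u') * (u * v - v * u) := by
      intro u hu v hv u' hu' v' hv'
      have hmem1 : (u * v - v * u) ∈ lieBr ((I ⊓ J : TwoSidedIdeal R) : Set R)
          ((I ⊓ J : TwoSidedIdeal R) : Set R) :=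
        AddSubgroup.subset_closure ⟨u, hu, v, hv, rfl⟩
      have hmem2 : (u' * v' - v' * u') ∈ lieBr ((I ⊓ J : TwoSidedIdeal R) : Set R)
          ((I ⊓ J : TwoSidedIdeal R) : Set R) :=
        AddSubgroup.subset_closure ⟨u', hu', v', hv', rfl⟩
      have hmem : (u * v - v * u) * (u' * v' - v' * u')
          - (u' * v' - v' * u') * (u * v - v * u) ∈ (⊥ : AddSubgroup R) := by
        rw [← hbot]
        exact AddSubgroup.subset_closure ⟨_, hmem1, _, hmem2, rfl⟩
      exact sub_eq_zero.mp (AddSubgroup.mem_bot.mp hmem)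
    exact hxy (key_comm hprime (I ⊓ J) k₀ hk₀ hx H x₀ y₀)
  · intro hbot
    have H : ∀ u ∈ I ⊓ J, ∀ v ∈ I ⊓ J, ∀ u' ∈ I ⊓ J, ∀ v' ∈ I ⊓ J,
        (u * v - v * u) * (u' * v' - v' * u') = (u' * v' - v' * u') * (u * v - v * u) := by
      intro u hu v hv u' hu' v' hv'
      have hmem1 : (u * v - v * u) ∈ lieBr (I : Set R) (J : Set R) :=
        AddSubgroup.subset_closure
          ⟨u, hu.1, v, hv.2, rfl⟩
      have hmem2 : (u' * v' - v' * u') ∈ lieBr (I : Set R) (J : Set R) :=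
        AddSubgroup.subset_closure
          ⟨u', hu'.1, v', hv'.2, rfl⟩
      have hmem : (u * v - v * u) * (u' * v' - v' * u')
          - (u' * v' - v' * u') * (u * v - v * u) ∈ (⊥ : AddSubgroup R) := by
        rw [← hbot]
        exact AddSubgroup.subset_closure ⟨_, hmem1, _, hmem2, rfl⟩
      exact sub_eq_zero.mp (AddSubgroup.mem_bot.mp hmem)
    exact hxy (key_comm hprime (I ⊓ J) k₀ hk₀ hx H x₀ y₀)
end

section
/- Let R be a ring and A an additive subgroup of R. Then [A, R] = [Ã, R], where Ã is the subring of R generated by A. -/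
lemma mem_lieBr_univ {R : Type*} [Ring R] {A : Set R} {a x : R} (ha : a ∈ A) :
    a * x - x * a ∈ lieBr A Set.univ :=
  AddSubgroup.subset_closure ⟨a, ha, x, Set.mem_univ x, rfl⟩

lemma closure_comm_mem {R : Type*} [Ring R] (A : AddSubgroup R) {a : R}
    (ha : a ∈ Subring.closure (A : Set R)) :
    ∀ x : R, a * x - x * a ∈ lieBr (A : Set R) Set.univ := by
  induction ha using Subring.closure_induction with
  | mem a ha => exact fun x => mem_lieBr_univ ha
  | zero => simpa using fun x : R => (lieBr (A : Set R) Set.univ).zero_mem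
  | one => simpa using fun x : R => (lieBr (A : Set R) Set.univ).zero_mem
  | add a b _ _ iha ihb =>
    intro x
    have := (lieBr (A : Set R) Set.univ).add_mem (iha x) (ihb x)
    have h : (a + b) * x - x * (a + b) = (a * x - x * a) + (b * x - x * b) := by noncomm_ring
    rw [h]; exact this
  | neg a _ iha =>
    intro x
    have := (lieBr (A : Set R) Set.univ).neg_mem (iha x)
    have h : (-a) * x - x * (-a) = -(a * x - x * a) := by noncomm_ring
    rw [h]; exact this
  | mul a b _ _ iha ihb =>
    intro x
    have := (lieBr (A : Set R) Set.univ).add_mem (ihb (x * a)) (iha (b * x))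
    have h : (a * b) * x - x * (a * b) =
        (b * (x * a) - (x * a) * b) + (a * (b * x) - (b * x) * a) := by noncomm_ring
    rw [h]; exact this

theorem stmt8 {R : Type*} [Ring R] (A : AddSubgroup R) :
    lieBr (A : Set R) Set.univ = lieBr (Subring.closure (A : Set R) : Set R) Set.univ := by
  apply le_antisymm
  · exact AddSubgroup.closure_mono (fun z ⟨a, ha, b, hb, hz⟩ =>
      ⟨a, Subring.subset_closure ha, b, hb, hz⟩)
  · rw [lieBr, AddSubgroup.closure_le]
    rintro z ⟨a, ha, b, -, rfl⟩
    exact closure_comm_mem A ha b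
end

section
/- Let R be a ring and L a Lie ideal of R. Then [I([L,L]), R] ⊆ [L, R] ⊆ L, where I([L,L]) is the two-sided ideal of R generated by [L, L]. -/
section

variable {R : Type*} [Ring R]

lemma lieBr_le_iff {A B : Set R} {H : AddSubgroup R} :
    lieBr A B ≤ H ↔ ∀ a ∈ A, ∀ b ∈ B, a * b - b * a ∈ H := by
  simp only [lieBr, AddSubgroup.closure_le, Set.ofPred_subset, SetLike.mem_coe]
  constructor
  · exact fun h a ha b hb => h _ ⟨a, ha, b, hb, rfl⟩
  · rintro h _ ⟨a, ha, b, hb, rfl⟩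
    exact h a ha b hb

lemma mem_lieBr {A B : Set R} {a b : R} (ha : a ∈ A) (hb : b ∈ B) : a * b - b * a ∈ lieBr A B :=
  lieBr_le_iff.1 le_rfl a ha b hb

lemma TwoSidedIdeal.coe_span_subset {s : Set R} {W : AddSubgroup R}
    (h : ∀ x ∈ s, ∀ r t : R, r * x * t ∈ W) : (span s : Set R) ⊆ W := by
  intro z hz
  rw [SetLike.mem_coe, mem_span_iff_mem_addSubgroup_closure] at hz
  refine (AddSubgroup.closure_le W).2 ?_ hz
  rintro _ ⟨_, ⟨r, -, x, hx, rfl⟩, t, -, rfl⟩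
  exact h x hx r t

namespace AddSubgroup

/-- The elements `v` with `[v, R] ⊆ H`. -/
def centralizerMod (H : AddSubgroup R) : AddSubgroup R :=
  ⨅ t : R, H.comap (AddMonoidHom.mulRight t - AddMonoidHom.mulLeft t)

lemma mem_centralizerMod {H : AddSubgroup R} {v : R} :
    v ∈ H.centralizerMod ↔ ∀ t, v * t - t * v ∈ H := by
  simp [centralizerMod, mem_iInf]

end AddSubgroup

open AddSubgroup

lemma subset_centralizerMod_lieBr (A : Set R) : A ⊆ (lieBr A Set.univ).centralizerMod :=
  fun _ hx => mem_centralizerMod.2 fun t => mem_lieBr hx (Set.mem_univ t)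

lemma mul_mem_centralizerMod_lieBr {A : Set R} {x y : R} (hx : x ∈ A) (hy : y ∈ A) :
    x * y ∈ (lieBr A Set.univ).centralizerMod := by
  refine mem_centralizerMod.2 fun t => ?_
  have e : x * y * t - t * (x * y) = (x * (y * t) - y * t * x) + (y * (t * x) - t * x * y) := by
    noncomm_ring
  rw [e]
  exact add_mem (mem_lieBr hx (Set.mem_univ _)) (mem_lieBr hy (Set.mem_univ _))

section LieIdeal

variable {L : AddSubgroup R} (hL : ∀ x ∈ L, ∀ r : R, x * r - r * x ∈ L)
include hL

lemma lieBr_univ_le : lieBr (L : Set R) Set.univ ≤ L :=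
  lieBr_le_iff.2 fun a ha b _ => hL a ha b

lemma mul_lieBracket_mul_mem_centralizerMod {x y : R} (hx : x ∈ L) (hy : y ∈ L) (r s : R) :
    r * (x * y - y * x) * s ∈ (lieBr (L : Set R) Set.univ).centralizerMod := by
  set W := (lieBr (L : Set R) Set.univ).centralizerMod
  have hLW : ∀ {u}, u ∈ L → u ∈ W := fun hu => subset_centralizerMod_lieBr _ hu
  have hLLW : ∀ {u v}, u ∈ L → v ∈ L → u * v ∈ W := mul_mem_centralizerMod_lieBr
  -- The first and third terms lie in `L`, the other three in `L²`.
  have e : r * (x * y - y * x) * s =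
      (x * (r * y * s) - (r * y * s) * x)
      - (x * (r * s) - (r * s) * x) * y
      - (y * (r * (x * s - s * x)) - (r * (x * s - s * x)) * y)
      + (y * r - r * y) * (x * s - s * x)
      - (x * r - r * x) * (y * s - s * y) := by noncomm_ring
  rw [e]
  refine sub_mem (add_mem (sub_mem (sub_mem ?_ ?_) ?_) ?_) ?_
  · exact hLW (hL x hx _)
  · exact hLLW (hL x hx _) hy
  · exact hLW (hL y hy _)
  · exact hLLW (hL y hy r) (hL x hx s)
  · exact hLLW (hL x hx r) (hL y hy s)

lemma coe_span_lieBr_subset_centralizerMod :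
    (TwoSidedIdeal.span (lieBr (L : Set R) (L : Set R) : Set R) : Set R) ⊆
      (lieBr (L : Set R) Set.univ).centralizerMod := by
  refine TwoSidedIdeal.coe_span_subset fun u hu r t => ?_
  have hsandwich : lieBr (L : Set R) (L : Set R) ≤
      (lieBr (L : Set R) Set.univ).centralizerMod.comap
        ((AddMonoidHom.mulRight t).comp (AddMonoidHom.mulLeft r)) :=
    lieBr_le_iff.2 fun x hx y hy => mul_lieBracket_mul_mem_centralizerMod hL hx hy r t
  exact hsandwich hu

end LieIdeal

end

theorem stmt9 {R : Type*} [Ring R]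
    (L : AddSubgroup R) (hL : ∀ x ∈ L, ∀ r : R, x * r - r * x ∈ L) :
    lieBr ((TwoSidedIdeal.span (lieBr (L : Set R) (L : Set R) : Set R) : TwoSidedIdeal R) : Set R)
        Set.univ ≤ lieBr (L : Set R) Set.univ ∧
    lieBr (L : Set R) Set.univ ≤ L := by
  refine ⟨lieBr_le_iff.2 fun u hu t _ => ?_, lieBr_univ_le hL⟩
  exact AddSubgroup.mem_centralizerMod.1 (coe_span_lieBr_subset_centralizerMod hL hu) t
end

section
/- Let R be a prime ring containing a nontrivial idempotent (e² = e with e ≠ 0, 1). Then R is [E(R), R]-prime: if a[E(R), R]b = 0 then a = 0 or b = 0. -/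
theorem stmt12 {R : Type*} [Ring R]
    (hprime : ∀ a b : R, (∀ x : R, a * x * b = 0) → a = 0 ∨ b = 0)
    (e : R) (he : IsIdempotentElem e) (he0 : e ≠ 0) (he1 : e ≠ 1) :
    ∀ a b : R,
      (∀ x ∈ lieBr ((AddSubgroup.closure {f : R | IsIdempotentElem f} : AddSubgroup R) : Set R)
        Set.univ, a * x * b = 0) → a = 0 ∨ b = 0 := by
  intro a b hab
  have hee : e * e = e := he
  have he' : ∀ y : R, e * (e * y) = e * y := fun y => by rw [← mul_assoc, hee]
  have hgen : ∀ f : R, IsIdempotentElem f → ∀ y : R,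
      f * y - y * f ∈ lieBr ((AddSubgroup.closure {f : R | IsIdempotentElem f} : AddSubgroup R) : Set R) Set.univ := by
    intro f hf y
    exact AddSubgroup.subset_closure ⟨f, AddSubgroup.subset_closure hf, y, trivial, rfl⟩
  -- a * (ex - exe) * b = 0
  have h1 : ∀ x : R, a * (e * x - e * x * e) * b = 0 := by
    intro x
    have := hab _ (hgen e he (e * x))
    simpa [mul_assoc, he'] using this
  -- a * (xe - exe) * b = 0
  have h2 : ∀ x : R, a * (x * e - e * x * e) * b = 0 := by
    intro x
    have h0 : a * (e * (x * e) - x * e * e) * b = 0 := hab _ (hgen e he (x * e))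
    have h3 : a * (e * x * e - x * e) * b = 0 := by
      rw [show e * x * e - x * e = e * (x * e) - x * e * e by
        simp [mul_assoc, hee]]
      exact h0
    have := congrArg Neg.neg h3
    simp only [neg_zero] at this
    rw [← this]
    noncomm_ring
  -- first primality: ae = 0 or (1-e)b = 0  (i.e. b - e*b = 0)
  have key1 : a * e = 0 ∨ b - e * b = 0 := by
    apply hprime
    intro x
    calc a * e * x * (b - e * b)
        = a * (e * x - e * x * e) * b + (a * (e * x * e * b) - a * (e * x * (e * b))) := by
          noncomm_ring
      _ = 0 := by rw [h1 x]; simp [mul_assoc, he']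
  -- second primality: a - a*e = 0 or e*b = 0
  have key2 : a - a * e = 0 ∨ e * b = 0 := by
    apply hprime
    intro x
    calc (a - a * e) * x * (e * b)
        = a * (x * e - e * x * e) * b := by noncomm_ring
      _ = 0 := h2 x
  by_cases ha : a = 0
  · exact Or.inl ha
  right
  rcases key1 with hae | hbe1
  · rcases key2 with hae1 | heb
    ·
      exact absurd (by rw [sub_eq_zero] at hae1; rw [hae1, hae]) ha
    · -- a*e = 0 and e*b = 0 : use idempotent f x = e + e*x - e*x*e
      have hcx : ∀ x : R, e * (x * b) = 0 := by
        intro x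
        set f : R := e + e * x - e * x * e with hfdef
        have hf : IsIdempotentElem f := by
          show f * f = f
          rw [hfdef]
          simp only [mul_add, add_mul, mul_sub, sub_mul, mul_assoc, hee, he']
          abel
        have af : a * f = 0 := by
          rw [hfdef]
          simp only [mul_add, mul_sub, ← mul_assoc, hae, zero_mul, sub_zero, add_zero, zero_add,
            sub_self]
        have fb : f * b = e * (x * b) := by
          rw [hfdef]
          simp only [add_mul, sub_mul, mul_assoc, heb, mul_zero, zero_add, sub_zero]
        have key : ∀ y : R, a * y * (e * (x * b)) = 0 := by
          intro y
          have hz := hab _ (hgen f hf y)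
          have e1 : a * (f * y - y * f) * b = a * f * (y * b) - a * y * (f * b) := by
            noncomm_ring
          rw [hz, af, fb, zero_mul] at e1
          have := e1.symm
          rw [zero_sub, neg_eq_zero] at this
          exact this
        exact (hprime a (e * (x * b)) key).resolve_left ha
      rcases hprime e b (fun x => by rw [mul_assoc]; exact hcx x) with h | h
      · exact absurd h he0
      · exact h
  · rcases key2 with hae1 | heb
    · -- b = e*b and a = a*e : use idempotent f x = e + x*e - e*x*e
      have haea : a * e = a := by rw [sub_eq_zero] at hae1; exact hae1.symm
      have heba : e * b = b := by rw [sub_eq_zero] at hbe1; exact hbe1.symm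
      have hcx : ∀ x : R, x * b - e * (x * b) = 0 := by
        intro x
        set f : R := e + x * e - e * x * e with hfdef
        have hf : IsIdempotentElem f := by
          show f * f = f
          rw [hfdef]
          simp only [mul_add, add_mul, mul_sub, sub_mul, mul_assoc, hee, he']
          abel
        have af : a * f = a := by
          rw [hfdef]
          simp only [mul_add, mul_sub, ← mul_assoc, haea]
          abel
        have fb : f * b = b + (x * b - e * (x * b)) := by
          rw [hfdef]
          simp only [add_mul, sub_mul, mul_assoc, heba]
          abel
        have key : ∀ y : R, a * y * (x * b - e * (x * b)) = 0 := by
          intro y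
          have hz := hab _ (hgen f hf y)
          have e1 : a * (f * y - y * f) * b = a * f * (y * b) - a * y * (f * b) := by
            noncomm_ring
          rw [hz, af, fb] at e1
          have e2 : a * y * (x * b - e * (x * b)) = -(a * (y * b) - a * y * (b + (x * b - e * (x * b)))) := by
            noncomm_ring
          rw [e2, ← e1]
          simp [mul_assoc]
        exact (hprime a _ key).resolve_left ha
      have h1e : (1 : R) - e ≠ 0 := sub_ne_zero.mpr (Ne.symm he1)
      rcases hprime (1 - e) b (fun x => by
          have := hcx x
          calc (1 - e) * x * b = x * b - e * (x * b) := by noncomm_ring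
            _ = 0 := this) with h | h
      · exact absurd h h1e
      · exact h
    · -- b = e*b and e*b = 0
      rw [sub_eq_zero] at hbe1
      rw [hbe1, heb]
end

section
/- Let R be a prime ring, d a derivation of R given by d(x) = bx - xb for some b ∈ R. Suppose there exist β in the center with a(b+β) = 0 and (b+β)c = 0 for some nonzero a, c ∈ R. Then R is not d(R)-semiprime: there exists a nonzero w ∈ R with w·d(x)·w = 0 for all x ∈ R. -/
theorem stmt14 {R : Type*} [Ring R]
    (hprime : ∀ a b : R, (∀ x : R, a * x * b = 0) → a = 0 ∨ b = 0)
    (b β : R) (hβ : ∀ r : R, β * r = r * β)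
    (a c : R) (ha : a ≠ 0) (hc : c ≠ 0)
    (hab : a * (b + β) = 0) (hbc : (b + β) * c = 0) :
    ∃ w : R, w ≠ 0 ∧ ∀ x : R, w * (b * x - x * b) * w = 0 := by
  have hy : ∃ y : R, c * y * a ≠ 0 := by
    by_contra h
    push_neg at h
    rcases hprime c a h with h' | h' <;> [exact hc h'; exact ha h']
  obtain ⟨y, hw⟩ := hy
  refine ⟨c * y * a, hw, fun x => ?_⟩
  have hab' : a * b = -(a * β) := by
    have := hab; rw [mul_add] at this; exact eq_neg_of_add_eq_zero_left this
  have hbc' : b * c = -(β * c) := by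
    have := hbc; rw [add_mul] at this; exact eq_neg_of_add_eq_zero_left this
  have key : a * (b * x - x * b) * c = 0 := by
    have h1 : a * (b * x) * c = -(a * β * x * c) := by
      rw [← mul_assoc, hab']; noncomm_ring
    have h2 : a * (x * b) * c = -(a * β * x * c) := by
      have : a * x * (b * c) = -(a * x * (β * c)) := by rw [hbc']; noncomm_ring
      calc a * (x * b) * c = a * x * (b * c) := by noncomm_ring
        _ = -(a * x * (β * c)) := this
        _ = -(a * (x * β) * c) := by noncomm_ring
        _ = -(a * (β * x) * c) := by rw [hβ x]
        _ = -(a * β * x * c) := by noncomm_ring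
    rw [mul_sub, sub_mul, h1, h2, sub_self]
  calc c * y * a * (b * x - x * b) * (c * y * a)
      = c * y * (a * (b * x - x * b) * c) * y * a := by noncomm_ring
    _ = 0 := by rw [key]; noncomm_ring
end

section
/- Every (von Neumann) regular ring R is idempotent semiprime: if a ∈ R satisfies aea = 0 for every idempotent e ∈ R, then a = 0. -/
theorem stmt19 {R : Type*} [Ring R]
    (hreg : ∀ x : R, ∃ y : R, x * y * x = x) :
    ∀ a : R, (∀ e : R, IsIdempotentElem e → a * e * a = 0) → a = 0 := by
  intro a h
  obtain ⟨y, hy⟩ := hreg a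
  have hu : (y * a) * (y * a) = y * a := by
    have : (y * a) * (y * a) = y * (a * y * a) := by noncomm_ring
    rw [this, hy]
  have ha2 : a * a = 0 := by
    have h1 := h (y * a) hu
    have h2 : a * (y * a) * a = a * a := by
      rw [← mul_assoc, hy]
    rw [h2] at h1
    exact h1
  have hc : ∀ c : R, a * c * a = 0 := by
    intro c
    set v : R := 1 + c * (1 - y * a) with hv
    have hvu : v * (y * a) = y * a := by
      have : v * (y * a) = y * a + c * (y * a - (y * a) * (y * a)) := by
        rw [hv]; noncomm_ring
      rw [this, hu, sub_self, mul_zero, add_zero]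
    have he : IsIdempotentElem ((y * a) * v) := by
      show ((y * a) * v) * ((y * a) * v) = (y * a) * v
      calc ((y * a) * v) * ((y * a) * v) = (y * a) * (v * (y * a)) * v := by
            noncomm_ring
        _ = ((y * a) * (y * a)) * v := by rw [hvu, mul_assoc]
        _ = (y * a) * v := by rw [hu]
    have h1 := h _ he
    have h2 : a * ((y * a) * v) * a = a * c * a := by
      have hau : a * (y * a) = a := by rw [← mul_assoc, hy]
      have hua : (y * a) * a = 0 := by rw [mul_assoc, ha2, mul_zero]
      have hva : v * a = a + c * a := by
        rw [hv]
        rw [add_mul, one_mul, mul_assoc, sub_mul, one_mul, hua, sub_zero]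
      calc a * ((y * a) * v) * a = (a * (y * a)) * (v * a) := by noncomm_ring
        _ = a * (a + c * a) := by rw [hau, hva]
        _ = a * a + a * (c * a) := by rw [mul_add]
        _ = a * c * a := by rw [ha2, zero_add, mul_assoc]
    rw [h2] at h1
    exact h1
  have := hc y
  rw [hy] at this
  exact this
end
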